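/- Define S(z1, z1', z3) = α(z1, z3) + β(z1', z3) where α(z1,z3) = arccos(-z1 z3/(sqrt(1+z1^2) sqrt(1+z3^2))) and β(z1',z3) = π - α(z1', z3). If z1' < z1 (convexity of the adjacent edges), then S is a strictly increasing function of z3, and S = π at z3 = 0. -/

import Mathlib

/-!
With `θ = arctan z` one has `sin θ = z / √(1 + z²)`, so the two arccosine arguments are
`-(a t)` and `b t` with `a = sin (arctan z1)`, `b = sin (arctan z1')` and `t = sin (arctan z3)`.
Since `arccos (-x) = π - arccos x = π/2 + arcsin x`, this gives
`S = π + (arcsin (a t) - arcsin (b t))`, which is `π` at `t = 0`. As a function of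
`t ∈ (-1, 1)` the bracket has derivative `a / √(1 - (a t)²) - b / √(1 - (b t)²)`, positive
because `u ↦ u / √(1 - (u t)²)` is increasing on `[-1, 1]` and `b < a`; finally `t` is a
strictly increasing function of `z3`.
-/

open Real Set

theorem div_sqrt_one_sub_mul_sq_lt {t x y : ℝ} (ht : |t| < 1) (hx : |x| ≤ 1) (hy : |y| ≤ 1)
    (hxy : x < y) : x / √(1 - (x * t) ^ 2) < y / √(1 - (y * t) ^ 2) := by
  have hxt : (x * t) ^ 2 < 1 := by
    rw [sq_lt_one_iff_abs_lt_one, abs_mul]; nlinarith [abs_nonneg x, abs_nonneg t]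
  have hyt : (y * t) ^ 2 < 1 := by
    rw [sq_lt_one_iff_abs_lt_one, abs_mul]; nlinarith [abs_nonneg y, abs_nonneg t]
  have hA := sqrt_pos.mpr (sub_pos.mpr hxt)
  have hB := sqrt_pos.mpr (sub_pos.mpr hyt)
  have hA2 := sq_sqrt (sub_pos.mpr hxt).le
  have hB2 := sq_sqrt (sub_pos.mpr hyt).le
  rw [div_lt_div_iff₀ hA hB]
  set A := √(1 - (x * t) ^ 2)
  set B := √(1 - (y * t) ^ 2)
  -- `t` drops out of the squares, so the cases reduce to signs and to `x² < y²` or `y² < x²`.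
  have hdiff : (y * A) ^ 2 - (x * B) ^ 2 = y ^ 2 - x ^ 2 := by
    rw [mul_pow, mul_pow, hA2, hB2]; ring
  by_contra! hle
  rcases le_or_gt 0 x with hx0 | hx0
  · nlinarith [mul_nonneg (sub_nonneg.mpr hle) (add_pos_of_nonneg_of_pos (mul_nonneg hx0 hB.le)
      (mul_pos (hx0.trans_lt hxy) hA)).le]
  rcases le_or_gt y 0 with hy0 | hy0
  · nlinarith [mul_nonneg (sub_nonneg.mpr hle) (add_nonneg (mul_pos (neg_pos.mpr hx0) hB).le
      (mul_nonneg (neg_nonneg.mpr hy0) hA.le))]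
  · nlinarith [mul_pos (neg_pos.mpr hx0) hB, mul_pos hy0 hA]

theorem strictMonoOn_arcsin_mul_sub_arcsin_mul {a b : ℝ} (ha : |a| ≤ 1) (hb : |b| ≤ 1)
    (hba : b < a) : StrictMonoOn (fun t => arcsin (a * t) - arcsin (b * t)) (Ioo (-1) 1) := by
  apply strictMonoOn_of_deriv_pos (convex_Ioo _ _) (by fun_prop)
  intro t ht
  rw [interior_Ioo, mem_Ioo, ← abs_lt] at ht
  have hderiv {c : ℝ} (hc : |c| ≤ 1) :
      HasDerivAt (fun t => arcsin (c * t)) (c / √(1 - (c * t) ^ 2)) t := by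
    have hct : |c * t| < 1 := by
      rw [abs_mul]; nlinarith [abs_nonneg c, abs_nonneg t]
    obtain ⟨h₁, h₂⟩ := abs_lt.mp hct
    simpa [div_eq_inv_mul, Function.comp_def] using
      (hasDerivAt_arcsin h₁.ne' h₂.ne).comp t ((hasDerivAt_id t).const_mul c)
  rw [((hderiv ha).fun_sub (hderiv hb)).deriv, sub_pos]
  exact div_sqrt_one_sub_mul_sq_lt ht hb ha hba

theorem abs_sin_arctan_lt_one (x : ℝ) : |sin (arctan x)| < 1 := by
  rw [← sq_lt_one_iff_abs_lt_one, ← sin_sq_add_cos_sq (arctan x)]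
  nlinarith [cos_arctan_pos x]

theorem arccos_neg_mul_add_arccos_mul (a b t : ℝ) :
    arccos (-(a * t)) + arccos (b * t) = π + (arcsin (a * t) - arcsin (b * t)) := by
  rw [arccos_neg, arccos_eq_pi_div_two_sub_arcsin, arccos_eq_pi_div_two_sub_arcsin]; ring

/-- Two-Quads Lemma: with
`S(z3) = arccos(-z1·z3/(√(1+z1²)√(1+z3²))) + arccos(z1'·z3/(√(1+z1'²)√(1+z3²)))`
and `z1' < z1` (convexity of the adjacent edges), `S` is a strictly increasing
function of `z3`, and `S(0) = π`. -/
theorem two_quads_angle_sum (z1 z1' : ℝ) (hconv : z1' < z1)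
    (S : ℝ → ℝ)
    (hS : ∀ z3, S z3 =
      Real.arccos (-z1 * z3 / (Real.sqrt (1 + z1 ^ 2) * Real.sqrt (1 + z3 ^ 2))) +
      Real.arccos (z1' * z3 / (Real.sqrt (1 + z1' ^ 2) * Real.sqrt (1 + z3 ^ 2)))) :
    StrictMono S ∧ S 0 = Real.pi := by
  let s z := sin (arctan z)
  have hS' (z : ℝ) : S z = π + (arcsin (s z1 * s z) - arcsin (s z1' * s z)) := by
    rw [hS, ← arccos_neg_mul_add_arccos_mul]
    simp only [s, sin_arctan]
    congr 2 <;> ring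
  refine ⟨fun x y hxy => ?_, by simp [hS', s]⟩
  have hs (z : ℝ) : |s z| < 1 := abs_sin_arctan_lt_one z
  have key := strictMonoOn_arcsin_mul_sub_arcsin_mul (hs z1).le (hs z1').le
    (sin_arctan_strictMono hconv) (abs_lt.mp (hs x)) (abs_lt.mp (hs y)) (sin_arctan_strictMono hxy)
  rw [hS', hS']
  exact add_lt_add_right key π
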